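/- Let n, m ≥ 1 be natural numbers, let L, δ ≥ 0 and b₁, b₂, b₃ > 0 be real numbers. Let μ, σ : EuclideanSpace ℝ (Fin m) → EuclideanSpace ℝ (Fin n) both be L-Lipschitz, and let y, y⋆ ∈ EuclideanSpace ℝ (Fin m) satisfy ‖y − y⋆‖₂ ≤ δ. Assume for all i: σ(y)ᵢ ≥ 1/b₃, σ(y⋆)ᵢ ≥ 1/b₃, |μ(y)ᵢ| ≤ b₂, |μ(y⋆)ᵢ| ≤ b₂. Let z⋆ : Fin n → ℝ satisfy |z⋆ᵢ| ≤ b₁ for every i. Then |ℓ(z⋆; μ(y), σ(y)) − ℓ(z⋆; μ(y⋆), σ(y⋆))| ≤ L · δ · √n · ((b₁ + b₂)²·b₃³ + (b₁ + b₂)·b₃² + b₃). -/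

import Mathlib

/-- The diagonal-Gaussian log-density
`ℓ(z; μ, s) = −(n/2)·log(2π) − ∑ᵢ log sᵢ − ∑ᵢ (zᵢ − μᵢ)²/(2 sᵢ²)`. -/
noncomputable def gaussLogDensity (n : ℕ) (z μ s : Fin n → ℝ) : ℝ :=
  -((n : ℝ) / 2) * Real.log (2 * Real.pi) - ∑ i, Real.log (s i)
    - ∑ i, (z i - μ i) ^ 2 / (2 * (s i) ^ 2)

/-!
Coordinatewise, the log-density is a sum of terms `log s + (z - p)² / (2 s²)`. On the region
`s ≥ 1 / b₃`, `|p| ≤ b₂`, `|z| ≤ b₁` such a term is `((b₁ + b₂)² b₃³ + b₃)`-Lipschitz in `s` and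
`(b₁ + b₂) b₃²`-Lipschitz in `p`, so the change of the log-density is controlled by the `ℓ¹`
distances of the parameters. Cauchy–Schwarz bounds these by `√n` times the Euclidean distances,
which are at most `L δ` by the Lipschitz hypotheses.
-/

open Real

lemma EuclideanSpace.sum_abs_le_sqrt_card_mul_norm {ι : Type*} [Fintype ι]
    (v : EuclideanSpace ℝ ι) : ∑ i, |v i| ≤ √(Fintype.card ι) * ‖v‖ := by
  have hsq : (∑ i, |v i|) ^ 2 ≤ (√(Fintype.card ι) * ‖v‖) ^ 2 := by
    rw [mul_pow, sq_sqrt (Nat.cast_nonneg _), EuclideanSpace.real_norm_sq_eq]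
    simpa only [sq_abs, Finset.card_univ] using
      sq_sum_le_card_mul_sum_sq (s := Finset.univ) (f := fun i => |v i|)
  exact (pow_le_pow_iff_left₀ (by positivity) (by positivity) two_ne_zero).mp hsq

lemma EuclideanSpace.sum_abs_sub_le_sqrt_card_mul {ι : Type*} [Fintype ι]
    {v w : EuclideanSpace ℝ ι} {r : ℝ} (h : ‖v - w‖ ≤ r) :
    ∑ i, |v i - w i| ≤ √(Fintype.card ι) * r := by
  simpa only [PiLp.sub_apply] using
    (sum_abs_le_sqrt_card_mul_norm (v - w)).trans (by gcongr)

lemma abs_sq_sub_sq_le {u v B : ℝ} (hu : |u| ≤ B) (hv : |v| ≤ B) :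
    |u ^ 2 - v ^ 2| ≤ 2 * B * |u - v| := by
  rw [sq_sub_sq, abs_mul]
  gcongr
  exact (abs_add_le u v).trans (by linarith)

lemma Real.log_sub_log_le_of_inv_le {c a b : ℝ} (hc : 0 < c) (ha : 0 < a) (hb : c⁻¹ ≤ b) :
    log a - log b ≤ c * |a - b| := by
  have hb0 : 0 < b := (inv_pos.2 hc).trans_le hb
  calc log a - log b = log (a / b) := (log_div ha.ne' hb0.ne').symm
    _ ≤ a / b - 1 := log_le_sub_one_of_pos (div_pos ha hb0)
    _ = b⁻¹ * (a - b) := by field_simp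
    _ ≤ b⁻¹ * |a - b| := by gcongr; exact le_abs_self _
    _ ≤ c * |a - b| := by gcongr; exact inv_le_of_inv_le₀ hc hb

lemma Real.abs_log_sub_log_le_of_inv_le {c a b : ℝ} (hc : 0 < c) (ha : c⁻¹ ≤ a)
    (hb : c⁻¹ ≤ b) : |log a - log b| ≤ c * |a - b| := by
  have ha0 : 0 < a := (inv_pos.2 hc).trans_le ha
  have hb0 : 0 < b := (inv_pos.2 hc).trans_le hb
  rw [abs_sub_le_iff]
  refine ⟨log_sub_log_le_of_inv_le hc ha0 hb, ?_⟩
  rw [abs_sub_comm]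
  exact log_sub_log_le_of_inv_le hc hb0 ha

lemma abs_inv_sq_sub_inv_sq_le_of_inv_le {c a b : ℝ} (hc : 0 < c) (ha : c⁻¹ ≤ a)
    (hb : c⁻¹ ≤ b) : |(a ^ 2)⁻¹ - (b ^ 2)⁻¹| ≤ 2 * c ^ 3 * |a - b| := by
  have ha0 : 0 < a := (inv_pos.2 hc).trans_le ha
  have hb0 : 0 < b := (inv_pos.2 hc).trans_le hb
  have ha' := inv_le_of_inv_le₀ hc ha
  have hb' := inv_le_of_inv_le₀ hc hb
  calc |(a ^ 2)⁻¹ - (b ^ 2)⁻¹| = |a - b| * (a⁻¹ * b⁻¹ * (a⁻¹ + b⁻¹)) := by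
        rw [abs_sub_comm a b, ← abs_of_pos (by positivity : 0 < a⁻¹ * b⁻¹ * (a⁻¹ + b⁻¹)),
          ← abs_mul]
        congr 1
        field_simp
        ring
    _ ≤ |a - b| * (c * c * (c + c)) := by gcongr
    _ = 2 * c ^ 3 * |a - b| := by ring

lemma abs_sq_div_sub_sq_div_le {B c z p q a b : ℝ} (hc : 0 < c) (hp : |z - p| ≤ B)
    (hq : |z - q| ≤ B) (ha : c⁻¹ ≤ a) (hb : c⁻¹ ≤ b) :
    |(z - p) ^ 2 / (2 * a ^ 2) - (z - q) ^ 2 / (2 * b ^ 2)| ≤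
      B * c ^ 2 * |p - q| + B ^ 2 * c ^ 3 * |a - b| := by
  have ha0 : 0 < a := (inv_pos.2 hc).trans_le ha
  have hinv : (a ^ 2)⁻¹ ≤ c ^ 2 := by
    rw [← inv_pow]
    gcongr
    exact inv_le_of_inv_le₀ hc ha
  have hmean : |(z - p) ^ 2 - (z - q) ^ 2| ≤ 2 * B * |p - q| := by
    simpa only [sub_sub_sub_cancel_left, abs_sub_comm q p] using abs_sq_sub_sq_le hp hq
  have hB : 0 ≤ B := (abs_nonneg _).trans hp
  have hscale := abs_inv_sq_sub_inv_sq_le_of_inv_le hc ha hb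
  have hsq : |(z - q) ^ 2| ≤ B ^ 2 := by rw [abs_pow]; gcongr
  calc |(z - p) ^ 2 / (2 * a ^ 2) - (z - q) ^ 2 / (2 * b ^ 2)|
      = |((z - p) ^ 2 - (z - q) ^ 2) * (a ^ 2)⁻¹ + (z - q) ^ 2 * ((a ^ 2)⁻¹ - (b ^ 2)⁻¹)| / 2 := by
        rw [eq_div_iff two_ne_zero, ← abs_two, ← abs_mul, abs_two]; congr 1; ring
    _ ≤ (|(z - p) ^ 2 - (z - q) ^ 2| * (a ^ 2)⁻¹
          + |(z - q) ^ 2| * |(a ^ 2)⁻¹ - (b ^ 2)⁻¹|) / 2 := by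
        gcongr
        refine (abs_add_le _ _).trans_eq ?_
        rw [abs_mul, abs_mul, abs_of_nonneg (by positivity : 0 ≤ (a ^ 2)⁻¹)]
    _ ≤ (2 * B * |p - q| * c ^ 2 + B ^ 2 * (2 * c ^ 3 * |a - b|)) / 2 := by gcongr
    _ = B * c ^ 2 * |p - q| + B ^ 2 * c ^ 3 * |a - b| := by ring

lemma abs_log_add_sq_div_sub_le {B c z p q a b : ℝ} (hc : 0 < c) (hp : |z - p| ≤ B)
    (hq : |z - q| ≤ B) (ha : c⁻¹ ≤ a) (hb : c⁻¹ ≤ b) :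
    |(log a + (z - p) ^ 2 / (2 * a ^ 2)) - (log b + (z - q) ^ 2 / (2 * b ^ 2))| ≤
      (B ^ 2 * c ^ 3 + c) * |a - b| + B * c ^ 2 * |p - q| := by
  rw [add_sub_add_comm]
  refine (abs_add_le _ _).trans ?_
  linarith [abs_log_sub_log_le_of_inv_le hc ha hb, abs_sq_div_sub_sq_div_le hc hp hq ha hb]

lemma gaussLogDensity_sub_gaussLogDensity (n : ℕ) (z μ s μ' s' : Fin n → ℝ) :
    gaussLogDensity n z μ s - gaussLogDensity n z μ' s' =
      ∑ i, ((log (s' i) + (z i - μ' i) ^ 2 / (2 * s' i ^ 2)) -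
        (log (s i) + (z i - μ i) ^ 2 / (2 * s i ^ 2))) := by
  simp only [gaussLogDensity, Finset.sum_sub_distrib, Finset.sum_add_distrib]
  ring

lemma abs_gaussLogDensity_sub_le {n : ℕ} {B c : ℝ} {z μ s μ' s' : Fin n → ℝ} (hc : 0 < c)
    (hμ : ∀ i, |z i - μ i| ≤ B) (hμ' : ∀ i, |z i - μ' i| ≤ B)
    (hs : ∀ i, c⁻¹ ≤ s i) (hs' : ∀ i, c⁻¹ ≤ s' i) :
    |gaussLogDensity n z μ s - gaussLogDensity n z μ' s'| ≤
      (B ^ 2 * c ^ 3 + c) * ∑ i, |s i - s' i| + B * c ^ 2 * ∑ i, |μ i - μ' i| := by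
  rw [gaussLogDensity_sub_gaussLogDensity, Finset.mul_sum, Finset.mul_sum,
    ← Finset.sum_add_distrib]
  refine (Finset.abs_sum_le_sum_abs _ _).trans (Finset.sum_le_sum fun i _ => ?_)
  rw [abs_sub_comm]
  exact abs_log_add_sq_div_sub_le hc (hμ i) (hμ' i) (hs i) (hs' i)

theorem factor_out_param_perturbation_bound_general
    (n m : ℕ)
    (L δ : ℝ) (hL : 0 ≤ L)
    (b₁ b₂ b₃ : ℝ) (hb₁ : 0 < b₁) (hb₂ : 0 < b₂) (hb₃ : 0 < b₃)
    (μ σ : EuclideanSpace ℝ (Fin m) → EuclideanSpace ℝ (Fin n))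
    (hμlip : ∀ a b : EuclideanSpace ℝ (Fin m), ‖μ a - μ b‖ ≤ L * ‖a - b‖)
    (hσlip : ∀ a b : EuclideanSpace ℝ (Fin m), ‖σ a - σ b‖ ≤ L * ‖a - b‖)
    (y ystar : EuclideanSpace ℝ (Fin m))
    (hy : ‖y - ystar‖ ≤ δ)
    (hσy : ∀ i : Fin n, 1 / b₃ ≤ σ y i)
    (hσystar : ∀ i : Fin n, 1 / b₃ ≤ σ ystar i)
    (hμy : ∀ i : Fin n, |μ y i| ≤ b₂)
    (hμystar : ∀ i : Fin n, |μ ystar i| ≤ b₂)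
    (zstar : Fin n → ℝ) (hz : ∀ i, |zstar i| ≤ b₁) :
    |gaussLogDensity n zstar (μ y) (σ y) - gaussLogDensity n zstar (μ ystar) (σ ystar)| ≤
      L * δ * Real.sqrt n *
        ((b₁ + b₂) ^ 2 * b₃ ^ 3 + (b₁ + b₂) * b₃ ^ 2 + b₃) := by
  have hσ : ∑ i, |σ y i - σ ystar i| ≤ √n * (L * δ) := by
    simpa only [Fintype.card_fin] using
      EuclideanSpace.sum_abs_sub_le_sqrt_card_mul ((hσlip y ystar).trans (by gcongr))
  have hμ : ∑ i, |μ y i - μ ystar i| ≤ √n * (L * δ) := by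
    simpa only [Fintype.card_fin] using
      EuclideanSpace.sum_abs_sub_le_sqrt_card_mul ((hμlip y ystar).trans (by gcongr))
  simp_rw [one_div] at hσy hσystar
  have hzμ : ∀ ν : Fin n → ℝ, (∀ i, |ν i| ≤ b₂) → ∀ i, |zstar i - ν i| ≤ b₁ + b₂ :=
    fun ν hν i => (abs_sub _ _).trans (add_le_add (hz i) (hν i))
  calc _ ≤ ((b₁ + b₂) ^ 2 * b₃ ^ 3 + b₃) * ∑ i, |σ y i - σ ystar i|
        + (b₁ + b₂) * b₃ ^ 2 * ∑ i, |μ y i - μ ystar i| :=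
        abs_gaussLogDensity_sub_le hb₃ (hzμ _ hμy) (hzμ _ hμystar) hσy hσystar
    _ ≤ ((b₁ + b₂) ^ 2 * b₃ ^ 3 + b₃) * (√n * (L * δ)) + (b₁ + b₂) * b₃ ^ 2 * (√n * (L * δ)) := by
        gcongr
    _ = _ := by ring

/-- Perturbing only the conditioning input `y` of the Gaussian
parameters `(μ(y), σ(y))`, with the evaluated latent `z⋆` held fixed, changes the
log-density by at most `L·δ·√n·((b₁+b₂)²b₃³ + (b₁+b₂)b₃² + b₃)`. -/
theorem factor_out_param_perturbation_bound
    (n m : ℕ) (hn : 1 ≤ n) (hm : 1 ≤ m)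
    (L δ : ℝ) (hL : 0 ≤ L) (hδ : 0 ≤ δ)
    (b₁ b₂ b₃ : ℝ) (hb₁ : 0 < b₁) (hb₂ : 0 < b₂) (hb₃ : 0 < b₃)
    (μ σ : EuclideanSpace ℝ (Fin m) → EuclideanSpace ℝ (Fin n))
    (hμlip : ∀ a b : EuclideanSpace ℝ (Fin m), ‖μ a - μ b‖ ≤ L * ‖a - b‖)
    (hσlip : ∀ a b : EuclideanSpace ℝ (Fin m), ‖σ a - σ b‖ ≤ L * ‖a - b‖)
    (y ystar : EuclideanSpace ℝ (Fin m))
    (hy : ‖y - ystar‖ ≤ δ)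
    (hσy : ∀ i : Fin n, 1 / b₃ ≤ σ y i)
    (hσystar : ∀ i : Fin n, 1 / b₃ ≤ σ ystar i)
    (hμy : ∀ i : Fin n, |μ y i| ≤ b₂)
    (hμystar : ∀ i : Fin n, |μ ystar i| ≤ b₂)
    (zstar : Fin n → ℝ) (hz : ∀ i, |zstar i| ≤ b₁) :
    |gaussLogDensity n zstar (μ y) (σ y) - gaussLogDensity n zstar (μ ystar) (σ ystar)| ≤
      L * δ * Real.sqrt n *
        ((b₁ + b₂) ^ 2 * b₃ ^ 3 + (b₁ + b₂) * b₃ ^ 2 + b₃) :=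
  factor_out_param_perturbation_bound_general n m L δ hL b₁ b₂ b₃ hb₁ hb₂ hb₃ μ σ hμlip hσlip y
    ystar hy hσy hσystar hμy hμystar zstar hz
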